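/- arXiv:1704.05257 — 2 statements merged into one kernel-verified Lean document; each statement's English description precedes it below -/
import Mathlib

section
/- Let G be the graph obtained from K_{s,t} by attaching a ≥ 1 pendent vertices to u and b ≥ 1 pendent vertices to v, where u, v are distinct vertices of the same part of K_{s,t} (s,t ≥ 2), and let G' be obtained by moving all a pendent edges from u to v. Then WW(G') − WW(G) = −7ab, where WW is the hyper-Wiener index. -/
open Finset
open scoped Classical

/-- Wiener index: sum of distances over unordered pairs of vertices. -/
noncomputable def wiener {V : Type*} [Fintype V] (G : SimpleGraph V) : ℚ :=
  (1/2) * ∑ u : V, ∑ v : V, (G.dist u v : ℚ)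

/-- Harary index: sum of reciprocal distances over unordered pairs of distinct vertices. -/
noncomputable def harary {V : Type*} [Fintype V] (G : SimpleGraph V) : ℚ :=
  (1/2) * ∑ p ∈ Finset.univ.offDiag, (1 : ℚ) / (G.dist p.1 p.2 : ℚ)

/-- Hyper-Wiener index: (1/2) Σ_{unordered pairs} (d + d²). -/
noncomputable def hyperWiener {V : Type*} [Fintype V] (G : SimpleGraph V) : ℚ :=
  (1/4) * ∑ u : V, ∑ v : V, ((G.dist u v : ℚ) + (G.dist u v : ℚ)^2)

/-- Eccentricity of a vertex: maximum distance to any other vertex. -/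
noncomputable def ecc {V : Type*} [Fintype V] (G : SimpleGraph V) (u : V) : ℕ :=
  Finset.univ.sup (fun v => G.dist u v)

/-- Connective eccentricity index: Σ_u deg(u)/ε(u). -/
noncomputable def cei {V : Type*} [Fintype V] (G : SimpleGraph V) : ℚ :=
  ∑ u : V, (G.degree u : ℚ) / (ecc G u : ℚ)

/-- Eccentricity distance sum: Σ_u ε(u)·D(u). -/
noncomputable def eds {V : Type*} [Fintype V] (G : SimpleGraph V) : ℚ :=
  ∑ u : V, (ecc G u : ℚ) * ∑ v : V, (G.dist u v : ℚ)

/-- The graph obtained from the complete bipartite graph `K_{s,t}` (first part `Fin s`,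
second part `Fin t`) by attaching `a` pendant vertices to the vertex `u` and `b` pendant
vertices to the vertex `v`, where `u v : Fin s` are in the same part. -/
def KstPend (s t a b : ℕ) (u v : Fin s) :
    SimpleGraph ((Fin s ⊕ Fin t) ⊕ (Fin a ⊕ Fin b)) :=
  SimpleGraph.fromRel (fun x y =>
    (∃ i j, x = Sum.inl (Sum.inl i) ∧ y = Sum.inl (Sum.inr j)) ∨
    (∃ p, x = Sum.inr (Sum.inl p) ∧ y = Sum.inl (Sum.inl u)) ∨
    (∃ q, x = Sum.inr (Sum.inr q) ∧ y = Sum.inl (Sum.inl v)))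

/-!
A pendant vertex is one step further than its support vertex from every other vertex, so all
distances in `KstPend s t a b u v` are read off an explicit table, and summing it gives the
hyper-Wiener index in closed form. The support vertices `u, v` enter the closed form only
through the `a * b` pairs of a pendant at `u` and a pendant at `v`: their distance is `4` when
`u ≠ v` (each pair contributing `(4 + 4²) / 2 = 10`) and `2` when `u = v` (contributing `3`).
-/

section

variable {α R : Type*} [Fintype α] [DecidableEq α] [CommRing R]

lemma Fintype.sum_ite_eq_const (w : α) (c d : R) :
    ∑ i, (if w = i then c else d) = c + (Fintype.card α - 1) * d := by
  rw [← Finset.add_sum_erase _ _ (Finset.mem_univ w), if_pos rfl,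
    Finset.sum_congr rfl fun i hi => if_neg (Finset.ne_of_mem_erase hi).symm,
    Finset.sum_const, Finset.card_erase_of_mem (Finset.mem_univ w), Finset.card_univ,
    nsmul_eq_mul, Nat.cast_pred (Fintype.card_pos_iff.2 ⟨w⟩)]

lemma Fintype.sum_ite_eq_const' (w : α) (c d : R) :
    ∑ i, (if i = w then c else d) = c + (Fintype.card α - 1) * d := by
  simp_rw [eq_comm (a := _) (b := w), Fintype.sum_ite_eq_const]

end

namespace SimpleGraph

variable {V : Type*} {G : SimpleGraph V} {x y z : V}

lemma dist_eq_two_of_adj_of_adj (hne : x ≠ y) (hnadj : ¬G.Adj x y) (hxz : G.Adj x z)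
    (hzy : G.Adj z y) : G.dist x y = 2 := by
  have : G.edist x y = 2 :=
    edist_eq_two_iff.2 ⟨hne, hnadj, z, G.mem_commonNeighbors.2 ⟨hxz, hzy.symm⟩⟩
  simp [dist, this]

lemma dist_eq_dist_add_one_of_neighborSet_eq_singleton (hx : G.neighborSet x = {z})
    (hyx : y ≠ x) (hzy : G.Reachable z y) : G.dist x y = G.dist z y + 1 := by
  have hxz : G.Adj x z := by simp [← mem_neighborSet, hx]
  have hle : G.dist x y ≤ G.dist x z + G.dist z y := hxz.reachable.dist_triangle_left y
  rw [dist_eq_one_iff_adj.2 hxz] at hle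
  obtain ⟨p, hp⟩ := (hxz.reachable.trans hzy).exists_walk_length_eq_dist
  cases p with
  | nil => exact absurd rfl hyx
  | cons hxw q =>
    -- a shortest walk leaves `x` through its only neighbour `z`
    obtain rfl : _ = z := by simpa [hx] using (mem_neighborSet ..).2 hxw
    have hge := dist_le q
    rw [Walk.length_cons] at hp
    omega

end SimpleGraph

/-! In `KstPend s t a b u v`, `.inl (.inl i)` and `.inl (.inr j)` are the *left* and *right*
vertices of `K_{s,t}`, and `.inr (.inl p)`, `.inr (.inr q)` the pendants at `u` and at `v`. -/

namespace KstPend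

open SimpleGraph

variable {s t a b : ℕ} {u v : Fin s}

lemma adj_left_right (i : Fin s) (j : Fin t) :
    (KstPend s t a b u v).Adj (.inl (.inl i)) (.inl (.inr j)) := by
  simp [KstPend]

lemma not_adj_left_left (i j : Fin s) :
    ¬(KstPend s t a b u v).Adj (.inl (.inl i)) (.inl (.inl j)) := by
  simp [KstPend]

lemma not_adj_right_right (i j : Fin t) :
    ¬(KstPend s t a b u v).Adj (.inl (.inr i)) (.inl (.inr j)) := by
  simp [KstPend]

lemma neighborSet_pendU (p : Fin a) :
    (KstPend s t a b u v).neighborSet (.inr (.inl p)) = {.inl (.inl u)} := by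
  ext w; rcases w with (_ | _) | (_ | _) <;> simp [KstPend, eq_comm]

lemma neighborSet_pendV (q : Fin b) :
    (KstPend s t a b u v).neighborSet (.inr (.inr q)) = {.inl (.inl v)} := by
  ext w; rcases w with (_ | _) | (_ | _) <;> simp [KstPend, eq_comm]

lemma connected (ht : 0 < t) : (KstPend s t a b u v).Connected := by
  have hleft (i : Fin s) : (KstPend s t a b u v).Reachable (.inl (.inl i)) (.inl (.inl u)) :=
    (adj_left_right i ⟨0, ht⟩).reachable.trans (adj_left_right u ⟨0, ht⟩).symm.reachable
  have hpend {x y} (h : (KstPend s t a b u v).neighborSet x = {y}) :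
      (KstPend s t a b u v).Reachable x y :=
    Adj.reachable (by simp [← mem_neighborSet, h])
  have hu (x) : (KstPend s t a b u v).Reachable x (.inl (.inl u)) := by
    rcases x with (i | j) | (p | q)
    · exact hleft i
    · exact (adj_left_right u j).symm.reachable
    · exact hpend (neighborSet_pendU p)
    · exact (hpend (neighborSet_pendV q)).trans (hleft v)
  exact (connected_iff_exists_forall_reachable _).2 ⟨_, fun x => (hu x).symm⟩

lemma dist_left_left (ht : 0 < t) (i j : Fin s) :
    (KstPend s t a b u v).dist (.inl (.inl i)) (.inl (.inl j)) = if i = j then 0 else 2 := by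
  split_ifs with h
  · simp [h]
  · exact dist_eq_two_of_adj_of_adj (by simpa) (not_adj_left_left i j)
      (adj_left_right i ⟨0, ht⟩) (adj_left_right j ⟨0, ht⟩).symm

lemma dist_right_right (i j : Fin t) :
    (KstPend s t a b u v).dist (.inl (.inr i)) (.inl (.inr j)) = if i = j then 0 else 2 := by
  split_ifs with h
  · simp [h]
  · exact dist_eq_two_of_adj_of_adj (by simpa) (not_adj_right_right i j)
      (adj_left_right u i).symm (adj_left_right u j)

lemma dist_left_right (i : Fin s) (j : Fin t) :
    (KstPend s t a b u v).dist (.inl (.inl i)) (.inl (.inr j)) = 1 :=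
  dist_eq_one_iff_adj.2 (adj_left_right i j)

lemma dist_right_left (j : Fin t) (i : Fin s) :
    (KstPend s t a b u v).dist (.inl (.inr j)) (.inl (.inl i)) = 1 :=
  dist_eq_one_iff_adj.2 (adj_left_right i j).symm

lemma dist_pendU (ht : 0 < t) (p : Fin a) {y} (hy : y ≠ .inr (.inl p)) :
    (KstPend s t a b u v).dist (.inr (.inl p)) y
      = (KstPend s t a b u v).dist (.inl (.inl u)) y + 1 :=
  dist_eq_dist_add_one_of_neighborSet_eq_singleton (neighborSet_pendU p) hy (connected ht _ _)

lemma dist_pendV (ht : 0 < t) (q : Fin b) {y} (hy : y ≠ .inr (.inr q)) :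
    (KstPend s t a b u v).dist (.inr (.inr q)) y
      = (KstPend s t a b u v).dist (.inl (.inl v)) y + 1 :=
  dist_eq_dist_add_one_of_neighborSet_eq_singleton (neighborSet_pendV q) hy (connected ht _ _)

lemma dist_to_pendU (ht : 0 < t) (p : Fin a) {x} (hx : x ≠ .inr (.inl p)) :
    (KstPend s t a b u v).dist x (.inr (.inl p))
      = (KstPend s t a b u v).dist x (.inl (.inl u)) + 1 := by
  rw [dist_comm, dist_pendU ht p hx, dist_comm]

lemma dist_to_pendV (ht : 0 < t) (q : Fin b) {x} (hx : x ≠ .inr (.inr q)) :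
    (KstPend s t a b u v).dist x (.inr (.inr q))
      = (KstPend s t a b u v).dist x (.inl (.inl v)) + 1 := by
  rw [dist_comm, dist_pendV ht q hx, dist_comm]

def distTable (s t a b : ℕ) (u v : Fin s) :
    (Fin s ⊕ Fin t) ⊕ (Fin a ⊕ Fin b) → (Fin s ⊕ Fin t) ⊕ (Fin a ⊕ Fin b) → ℕ
  | .inl (.inl i), .inl (.inl j) => if i = j then 0 else 2
  | .inl (.inl _), .inl (.inr _) => 1
  | .inl (.inl i), .inr (.inl _) => if i = u then 1 else 3
  | .inl (.inl i), .inr (.inr _) => if i = v then 1 else 3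
  | .inl (.inr _), .inl (.inl _) => 1
  | .inl (.inr i), .inl (.inr j) => if i = j then 0 else 2
  | .inl (.inr _), .inr _ => 2
  | .inr _, .inl (.inr _) => 2
  | .inr (.inl _), .inl (.inl i) => if i = u then 1 else 3
  | .inr (.inr _), .inl (.inl i) => if i = v then 1 else 3
  | .inr (.inl p), .inr (.inl q) => if p = q then 0 else 2
  | .inr (.inr p), .inr (.inr q) => if p = q then 0 else 2
  | .inr (.inl _), .inr (.inr _) => if u = v then 2 else 4
  | .inr (.inr _), .inr (.inl _) => if u = v then 2 else 4

lemma dist_eq_distTable (ht : 0 < t) (x y) :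
    (KstPend s t a b u v).dist x y = distTable s t a b u v x y := by
  rcases x with (i | j) | (p | q) <;> rcases y with (i' | j') | (p' | q') <;>
    simp only [distTable] <;> try split_ifs
  all_goals simp_all [eq_comm, dist_pendU ht, dist_to_pendU ht, dist_pendV ht, dist_to_pendV ht,
    dist_left_left ht, dist_right_right, dist_left_right, dist_right_left]

lemma hyperWiener_eq (ht : 0 < t) :
    hyperWiener (KstPend s t a b u v) =
      3 / 2 * (s * (s - 1) + t * (t - 1) + a * (a - 1) + b * (b - 1)) + s * t
        + (a + b) * (6 * s - 5 + 3 * t) + (if u = v then 3 else 10) * a * b := by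
  simp only [hyperWiener, dist_eq_distTable ht, Fintype.sum_sum_type, distTable, Nat.cast_ite,
    ite_pow, ite_add_ite]
  by_cases huv : u = v <;>
    simp [huv, Fintype.sum_ite_eq_const, Fintype.sum_ite_eq_const', sum_add_distrib] <;> ring

end KstPend

theorem hyperWiener_move_pendants_general (s t a b : ℕ) (ht : 2 ≤ t) (u v : Fin s) (huv : u ≠ v) :
    hyperWiener (KstPend s t a b v v) - hyperWiener (KstPend s t a b u v)
      = -7 * (a : ℚ) * b := by
  rw [KstPend.hyperWiener_eq (by omega), KstPend.hyperWiener_eq (by omega), if_pos rfl,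
    if_neg huv]
  ring

/-- Moving all `a` pendant edges from `u` to `v` changes the hyper-Wiener index by
exactly `-7ab`. -/
theorem hyperWiener_move_pendants (s t a b : ℕ) (hs : 2 ≤ s) (ht : 2 ≤ t)
    (ha : 1 ≤ a) (hb : 1 ≤ b) (u v : Fin s) (huv : u ≠ v) :
    hyperWiener (KstPend s t a b v v) - hyperWiener (KstPend s t a b u v)
      = -7 * (a : ℚ) * b :=
  hyperWiener_move_pendants_general s t a b ht u v huv
end

section
/- For positive integers n, k, x with 2 ≤ x ≤ n−k−x, the Harary index of B_k(x, n−k−x) equals (−6x² + (6n−8k)x + 3n² − 3n + 8k)/12. -/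
/-!
In `B_k(x, y)` two vertices of the same part of `K_{x,y}` are at distance 2 and vertices of
different parts at distance 1; a pendant vertex sees everything through `w`, so its distances
are those of `w` plus one. Hence the reciprocal status `∑ v, 1 / d(u, v)` takes only four
values, according as `u` is `w`, another vertex of its part, a vertex of the other part, or a
pendant vertex, and the Harary index is half their weighted sum.
-/

open Finset
open scoped Classical

/-- `Bgraph x y k w`: the bipartite graph obtained from the complete bipartite graph
`K_{x,y}` (parts `Fin x` and `Fin y`) by attaching `k` pendant vertices to the vertex `w`
of the part of size `x`. With `y = n - k - x` this is the graph `B_k(x, n-k-x)`. -/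
def Bgraph (x y k : ℕ) (w : Fin x) : SimpleGraph ((Fin x ⊕ Fin y) ⊕ Fin k) :=
  SimpleGraph.fromRel (fun p q =>
    (∃ i j, p = Sum.inl (Sum.inl i) ∧ q = Sum.inl (Sum.inr j)) ∨
    (∃ m, p = Sum.inr m ∧ q = Sum.inl (Sum.inl w)))

theorem Fintype.sum_eq_add_card_sub_one_mul {α R : Type*} [Fintype α] [Ring R] (a : α)
    {f : α → R} {d c : R} (ha : f a = d) (hf : ∀ b, b ≠ a → f b = c) :
    ∑ b, f b = d + ((Fintype.card α : R) - 1) * c := by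
  rw [← Finset.add_sum_erase _ _ (Finset.mem_univ a), ha,
    Finset.sum_congr rfl fun b hb => hf b (Finset.ne_of_mem_erase hb), Finset.sum_const,
    Finset.card_erase_of_mem (Finset.mem_univ a), Finset.card_univ, nsmul_eq_mul,
    Nat.cast_pred (Fintype.card_pos_iff.mpr ⟨a⟩)]

noncomputable def reciprocalStatus {V : Type*} [Fintype V] (G : SimpleGraph V) (u : V) : ℚ :=
  ∑ v, (1 : ℚ) / G.dist u v

/-- The diagonal does not contribute because `1 / 0 = 0` in `ℚ`. -/
theorem harary_eq_half_sum_reciprocalStatus {V : Type*} [Fintype V] (G : SimpleGraph V) :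
    harary G = (1 / 2) * ∑ u, reciprocalStatus G u := by
  simp only [harary, reciprocalStatus]
  rw [← Finset.sum_product', ← Finset.diag_union_offDiag,
    Finset.sum_union (Finset.disjoint_diag_offDiag _), Finset.sum_eq_zero (s := Finset.diag _),
    zero_add]
  intro p hp
  rw [(Finset.mem_diag.mp hp).2, SimpleGraph.dist_self, Nat.cast_zero, div_zero]

namespace SimpleGraph

variable {V : Type*} {G : SimpleGraph V} {u v z : V}

theorem dist_eq_two_of_adj_of_adj_s13 (hne : u ≠ v) (hnadj : ¬G.Adj u v) (huz : G.Adj u z)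
    (hzv : G.Adj z v) : G.dist u v = 2 :=
  le_antisymm (by simpa using G.dist_le (huz.toWalk.append hzv.toWalk))
    ((huz.reachable.trans hzv.reachable).one_lt_dist_of_ne_of_not_adj hne hnadj)

theorem dist_eq_dist_add_one_of_forall_adj_eq (hu : ∀ z', G.Adj u z' → z' = z)
    (huz : G.Adj u z) (hvu : v ≠ u) (hzv : G.Reachable z v) :
    G.dist u v = G.dist z v + 1 := by
  obtain ⟨p, hp⟩ := hzv.exists_walk_length_eq_dist
  refine le_antisymm (by simpa [hp] using G.dist_le (Walk.cons huz p)) ?_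
  obtain ⟨q, hq⟩ := (huz.reachable.trans hzv).exists_walk_length_eq_dist
  cases q with
  | nil => exact absurd rfl hvu
  | cons h q =>
    obtain rfl := hu _ h
    simpa [← hq] using G.dist_le q

end SimpleGraph

namespace Bgraph

open SimpleGraph

variable {x y k : ℕ} {w : Fin x}

theorem adj_left_right (i : Fin x) (j : Fin y) :
    (Bgraph x y k w).Adj (.inl (.inl i)) (.inl (.inr j)) := by
  simp [Bgraph]

theorem adj_pendant_center (m : Fin k) : (Bgraph x y k w).Adj (.inr m) (.inl (.inl w)) := by
  simp [Bgraph]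

theorem not_adj_left_left (i i' : Fin x) :
    ¬(Bgraph x y k w).Adj (.inl (.inl i)) (.inl (.inl i')) := by
  simp [Bgraph]

theorem not_adj_right_right (j j' : Fin y) :
    ¬(Bgraph x y k w).Adj (.inl (.inr j)) (.inl (.inr j')) := by
  simp [Bgraph]

theorem eq_center_of_adj_pendant {m : Fin k} {v : (Fin x ⊕ Fin y) ⊕ Fin k}
    (h : (Bgraph x y k w).Adj (.inr m) v) : v = .inl (.inl w) := by
  rcases v with (i | j) | m' <;> simp_all [Bgraph]

theorem reachable_center (hy : 0 < y) (v : (Fin x ⊕ Fin y) ⊕ Fin k) :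
    (Bgraph x y k w).Reachable (.inl (.inl w)) v := by
  rcases v with (i | j) | m
  · exact (adj_left_right w ⟨0, hy⟩).reachable.trans
      (adj_left_right i ⟨0, hy⟩).reachable.symm
  · exact (adj_left_right w j).reachable
  · exact (adj_pendant_center m).reachable.symm

theorem dist_left_right (i : Fin x) (j : Fin y) :
    (Bgraph x y k w).dist (.inl (.inl i)) (.inl (.inr j)) = 1 :=
  dist_eq_one_iff_adj.mpr (adj_left_right i j)

theorem dist_right_left (j : Fin y) (i : Fin x) :
    (Bgraph x y k w).dist (.inl (.inr j)) (.inl (.inl i)) = 1 := by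
  rw [dist_comm, dist_left_right]

theorem dist_left_left (hy : 0 < y) {i i' : Fin x} (h : i ≠ i') :
    (Bgraph x y k w).dist (.inl (.inl i)) (.inl (.inl i')) = 2 :=
  dist_eq_two_of_adj_of_adj_s13 (by simpa using h) (not_adj_left_left i i')
    (adj_left_right i ⟨0, hy⟩) (adj_left_right i' ⟨0, hy⟩).symm

theorem dist_right_right {j j' : Fin y} (h : j ≠ j') :
    (Bgraph x y k w).dist (.inl (.inr j)) (.inl (.inr j')) = 2 :=
  dist_eq_two_of_adj_of_adj_s13 (by simpa using h) (not_adj_right_right j j')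
    (adj_left_right w j).symm (adj_left_right w j')

theorem dist_pendant_center (m : Fin k) :
    (Bgraph x y k w).dist (.inr m) (.inl (.inl w)) = 1 :=
  dist_eq_one_iff_adj.mpr (adj_pendant_center m)

theorem dist_center_pendant (m : Fin k) :
    (Bgraph x y k w).dist (.inl (.inl w)) (.inr m) = 1 := by
  rw [dist_comm, dist_pendant_center]

theorem dist_pendant (hy : 0 < y) (m : Fin k) {v : (Fin x ⊕ Fin y) ⊕ Fin k}
    (hv : v ≠ .inr m) :
    (Bgraph x y k w).dist (.inr m) v = (Bgraph x y k w).dist (.inl (.inl w)) v + 1 :=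
  dist_eq_dist_add_one_of_forall_adj_eq (fun _ => eq_center_of_adj_pendant)
    (adj_pendant_center m) hv (reachable_center hy v)

theorem dist_pendant_left (hy : 0 < y) (m : Fin k) {i : Fin x} (hi : i ≠ w) :
    (Bgraph x y k w).dist (.inr m) (.inl (.inl i)) = 3 := by
  rw [dist_pendant hy m (by simp), dist_left_left hy hi.symm]

theorem dist_left_pendant (hy : 0 < y) {i : Fin x} (hi : i ≠ w) (m : Fin k) :
    (Bgraph x y k w).dist (.inl (.inl i)) (.inr m) = 3 := by
  rw [dist_comm, dist_pendant_left hy m hi]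

theorem dist_pendant_right (hy : 0 < y) (m : Fin k) (j : Fin y) :
    (Bgraph x y k w).dist (.inr m) (.inl (.inr j)) = 2 := by
  rw [dist_pendant hy m (by simp), dist_left_right]

theorem dist_right_pendant (hy : 0 < y) (j : Fin y) (m : Fin k) :
    (Bgraph x y k w).dist (.inl (.inr j)) (.inr m) = 2 := by
  rw [dist_comm, dist_pendant_right hy m j]

theorem dist_pendant_pendant (hy : 0 < y) {m m' : Fin k} (h : m ≠ m') :
    (Bgraph x y k w).dist (.inr m) (.inr m') = 2 := by
  rw [dist_pendant hy m (by simpa using h.symm), dist_center_pendant]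

theorem reciprocalStatus_center (hy : 0 < y) :
    reciprocalStatus (Bgraph x y k w) (.inl (.inl w)) = (x - 1) / 2 + y + k := by
  rw [reciprocalStatus, Fintype.sum_sum_type, Fintype.sum_sum_type,
    Fintype.sum_eq_add_card_sub_one_mul w (d := 0) (c := 1 / 2) (by simp)
      fun i hi => by rw [dist_left_left hy hi.symm]; norm_num]
  simp [dist_left_right, dist_center_pendant]
  ring

theorem reciprocalStatus_left (hy : 0 < y) {i : Fin x} (hi : i ≠ w) :
    reciprocalStatus (Bgraph x y k w) (.inl (.inl i)) = (x - 1) / 2 + y + k / 3 := by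
  rw [reciprocalStatus, Fintype.sum_sum_type, Fintype.sum_sum_type,
    Fintype.sum_eq_add_card_sub_one_mul i (d := 0) (c := 1 / 2) (by simp)
      fun i' hi' => by rw [dist_left_left hy hi'.symm]; norm_num]
  simp [dist_left_right, dist_left_pendant hy hi]
  ring

theorem reciprocalStatus_right (hy : 0 < y) (j : Fin y) :
    reciprocalStatus (Bgraph x y k w) (.inl (.inr j)) = x + (y - 1) / 2 + k / 2 := by
  rw [reciprocalStatus, Fintype.sum_sum_type, Fintype.sum_sum_type,
    Fintype.sum_eq_add_card_sub_one_mul j (d := 0) (c := 1 / 2) (by simp)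
      fun j' hj' => by rw [dist_right_right hj'.symm]; norm_num]
  simp [dist_right_left, dist_right_pendant hy]
  ring

theorem reciprocalStatus_pendant (hy : 0 < y) (m : Fin k) :
    reciprocalStatus (Bgraph x y k w) (.inr m) = 1 + (x - 1) / 3 + y / 2 + (k - 1) / 2 := by
  rw [reciprocalStatus, Fintype.sum_sum_type, Fintype.sum_sum_type,
    Fintype.sum_eq_add_card_sub_one_mul w (d := 1) (c := 1 / 3) (by simp [dist_pendant_center])
      fun i hi => by rw [dist_pendant_left hy m hi]; norm_num,
    Fintype.sum_eq_add_card_sub_one_mul m (d := 0) (c := 1 / 2) (by simp)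
      fun m' hm' => by rw [dist_pendant_pendant hy hm'.symm]; norm_num]
  simp [dist_pendant_right hy]
  ring

theorem harary_eq (hy : 0 < y) :
    harary (Bgraph x y k w) = ((x - 1) * ((x - 1) / 2 + y + k / 3) + ((x - 1) / 2 + y + k)
      + y * (x + (y - 1) / 2 + k / 2) + k * (1 + (x - 1) / 3 + y / 2 + (k - 1) / 2)) / 2 := by
  rw [harary_eq_half_sum_reciprocalStatus, Fintype.sum_sum_type, Fintype.sum_sum_type,
    Fintype.sum_eq_add_card_sub_one_mul w (reciprocalStatus_center hy)
      fun i hi => reciprocalStatus_left hy hi]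
  simp [reciprocalStatus_right hy, reciprocalStatus_pendant hy]
  ring

end Bgraph

theorem harary_Bgraph_general (n k x y : ℕ) (hn : n = x + y + k)
    (hxy : x ≤ y) (w : Fin x) :
    harary (Bgraph x y k w)
      = (-6 * (x : ℚ)^2 + (6 * (n : ℚ) - 8 * k) * x + 3 * (n : ℚ)^2 - 3 * n + 8 * k) / 12 := by
  subst hn
  rw [Bgraph.harary_eq (w.pos.trans_le hxy)]
  push_cast
  ring

/-- Harary index of `B_k(x, n-k-x)` (here `y = n - k - x`). -/
theorem harary_Bgraph (n k x y : ℕ) (hn : n = x + y + k) (hk : 1 ≤ k)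
    (hx : 2 ≤ x) (hxy : x ≤ y) (w : Fin x) :
    harary (Bgraph x y k w)
      = (-6 * (x : ℚ)^2 + (6 * (n : ℚ) - 8 * k) * x + 3 * (n : ℚ)^2 - 3 * n + 8 * k) / 12 :=
  harary_Bgraph_general n k x y hn hxy w
end
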